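/- Suppose φ satisfies Assumption (A) with s > d. Then there exists a₀ ∈ (0, r₀] such that for every 0 < a ≤ a₀ one has v₀(a) < ∞ and A(a) := (b(a) − 2v₀(a))/4 > 0, and every finite configuration γ ⊂ ℝ^d satisfies the strong superstability inequality U(γ) ≥ A(a) · Σ_{Δ∈Δ̄_a : |γ_Δ|≥2} |γ_Δ|² − (v₀(a)/2)·|γ|. -/

import Mathlib

open MeasureTheory Filter Topology Set
open scoped BigOperators ENNReal NNReal

noncomputable section

attribute [local instance] Classical.propDecidable

/-- Points of `ℝ^d` (Euclidean space). -/
abbrev Pt (d : ℕ) : Type := EuclideanSpace ℝ (Fin d)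

/-- The index `r ∈ ℤ^d` of the cube `Δ_a(r)` of the partition `Δ̄_a` containing `x`:
for `a > 0` we have `cubeIdx d a x = r ↔ ∀ i, a*(r i - 1/2) ≤ x i ∧ x i < a*(r i + 1/2)`. -/
def cubeIdx (d : ℕ) (a : ℝ) (x : Pt d) : Fin d → ℤ := fun i => ⌊x i / a + 1/2⌋

/-- `φ⁺(t) = max {0, φ(t)}`. -/
def phiPlus (φ : ℝ → ℝ) (t : ℝ) : ℝ := max (φ t) 0

/-- `φ⁻(t) = -min {0, φ(t)}`. -/
def phiMinus (φ : ℝ → ℝ) (t : ℝ) : ℝ := max (-(φ t)) 0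

/-- Energy `U(γ) = Σ_{{x,y}⊂γ} φ(|x-y|)` of a finite configuration. -/
def energy (d : ℕ) (φ : ℝ → ℝ) (γ : Finset (Pt d)) : ℝ :=
  (∑ p ∈ γ.offDiag, φ (dist p.1 p.2)) / 2

/-- Interaction energy `W(η;γ) = Σ_{x∈η} Σ_{y∈γ} φ(|x-y|)`. -/
def interW (d : ℕ) (φ : ℝ → ℝ) (η γ : Finset (Pt d)) : ℝ :=
  ∑ x ∈ η, ∑ y ∈ γ, φ (dist x y)

/-- Number of points of `γ` in the cube `Δ_a(r)`, i.e. `|γ_Δ|`. -/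
def cubeCount (d : ℕ) (a : ℝ) (γ : Finset (Pt d)) (r : Fin d → ℤ) : ℕ :=
  (γ.filter fun x => cubeIdx d a x = r).card

/-- `Σ_{Δ ∈ Δ̄_a : |γ_Δ| ≥ 2} |γ_Δ|²`. -/
def densSum (d : ℕ) (a : ℝ) (γ : Finset (Pt d)) : ℝ :=
  ∑ r ∈ γ.image (cubeIdx d a),
    if 2 ≤ cubeCount d a γ r then (cubeCount d a γ r : ℝ) ^ 2 else 0

/-- `b(a) = inf {φ⁺(|x-y|) : x ≠ y lie in one common cube of Δ̄_a}`. -/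
def bVal (d : ℕ) (φ : ℝ → ℝ) (a : ℝ) : ℝ :=
  sInf {t : ℝ | ∃ x y : Pt d, x ≠ y ∧ cubeIdx d a x = cubeIdx d a y ∧ t = phiPlus φ (dist x y)}

/-- `v₀(a) = Σ_{Δ'∈Δ̄_a} sup_{x∈Δ₀} sup_{y∈Δ'} φ⁻(|x-y|)` (valued in `ℝ≥0∞`). -/
def v0E (d : ℕ) (φ : ℝ → ℝ) (a : ℝ) : ℝ≥0∞ :=
  ∑' r : Fin d → ℤ,
    ⨆ x ∈ {x : Pt d | cubeIdx d a x = 0}, ⨆ y ∈ {y : Pt d | cubeIdx d a y = r},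
      ENNReal.ofReal (phiMinus φ (dist x y))

/-- Real value of `v₀(a)`. -/
def v0Val (d : ℕ) (φ : ℝ → ℝ) (a : ℝ) : ℝ := (v0E d φ a).toReal

/-- Assumption (A) on the interaction potential. -/
structure AssumptionA (d : ℕ) (φ : ℝ → ℝ) (r₀ R φ₀ φ₁ ε₀ s : ℝ) : Prop where
  cont : ContinuousOn φ (Set.Ioi (0 : ℝ))
  r0_pos : 0 < r₀
  R_gt : r₀ < R
  phi0_pos : 0 < φ₀
  phi1_pos : 0 < φ₁
  eps0_pos : 0 < ε₀
  s_ge : (d : ℝ) ≤ s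
  decay : ∀ t : ℝ, R ≤ t → -(φ₁ / t ^ ((d : ℝ) + ε₀)) ≤ φ t
  core : ∀ t : ℝ, 0 < t → t ≤ r₀ → φ₀ / t ^ s ≤ φ t

/-- `χ₋^a(γ) = 1` iff no cube of `Δ̄_a` contains two or more points of `γ`. -/
def chiM (d : ℕ) (a : ℝ) (γ : Finset (Pt d)) : ℝ :=
  if ∀ x ∈ γ, ∀ y ∈ γ, cubeIdx d a x = cubeIdx d a y → x = y then 1 else 0

/-- The finite configuration `{y₁,…,y_n}`. -/
def confOf {d n : ℕ} (y : Fin n → Pt d) : Finset (Pt d) := Finset.image y Finset.univ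

/-- Weighted grand partition function `1 + Σ_{n≥1} (zⁿ/n!) ∫_{Λⁿ} e^{-βU({x₁,…,xₙ})} w({x₁,…,xₙ})`. -/
def ZW (d : ℕ) (φ : ℝ → ℝ) (z β : ℝ) (Λ : Set (Pt d)) (w : Finset (Pt d) → ℝ) : ℝ :=
  1 + ∑' n : ℕ, (z ^ (n + 1) / (n + 1).factorial) *
    ∫ y in {y : Fin (n + 1) → Pt d | ∀ i, y i ∈ Λ},
      Real.exp (-β * energy d φ (confOf y)) * w (confOf y)

/-- Grand partition function `Z_Λ(z,β)`. -/
def ZΛ (d : ℕ) (φ : ℝ → ℝ) (z β : ℝ) (Λ : Set (Pt d)) : ℝ := ZW d φ z β Λ fun _ => 1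

/-- Dilute (quasi-lattice approximated) partition function `Z_Λ^{(-)}(z,β,a)`. -/
def ZΛm (d : ℕ) (φ : ℝ → ℝ) (z β a : ℝ) (Λ : Set (Pt d)) : ℝ := ZW d φ z β Λ (chiM d a)

/-- `Σ_{n≥0} (zⁿ/n!) ∫_{Λⁿ} e^{-βU(η∪{y₁,…,y_n})} w(η∪{y₁,…,y_n})`. -/
def corrInt (d : ℕ) (φ : ℝ → ℝ) (z β : ℝ) (Λ : Set (Pt d)) (η : Finset (Pt d))
    (w : Finset (Pt d) → ℝ) : ℝ :=
  Real.exp (-β * energy d φ η) * w η +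
  ∑' n : ℕ, (z ^ (n + 1) / (n + 1).factorial) *
    ∫ y in {y : Fin (n + 1) → Pt d | ∀ i, y i ∈ Λ},
      Real.exp (-β * energy d φ (η ∪ confOf y)) * w (η ∪ confOf y)

/-- Finite-volume correlation function `ρ_Λ(η;z,β)`. -/
def rhoΛ (d : ℕ) (φ : ℝ → ℝ) (z β : ℝ) (Λ : Set (Pt d)) (η : Finset (Pt d)) : ℝ :=
  z ^ η.card / ZΛ d φ z β Λ * corrInt d φ z β Λ η fun _ => 1

/-- Approximated correlation function `ρ_Λ^{(-)}(η;z,β,a)`. -/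
def rhoΛm (d : ℕ) (φ : ℝ → ℝ) (z β a : ℝ) (Λ : Set (Pt d)) (η : Finset (Pt d)) : ℝ :=
  z ^ η.card / ZΛm d φ z β a Λ * corrInt d φ z β Λ η (chiM d a)

/-- `ε₁(a)`. -/
def eps1 (d : ℕ) (φ : ℝ → ℝ) (z β a : ℝ) : ℝ :=
  1/2 * z^2 * a^(2*d) * Real.exp (-β * (bVal d φ a - 5 * v0Val d φ a)) *
    Real.exp (z * a^d * Real.exp (-β * (bVal d φ a - 3 * v0Val d φ a)))

/-- The cube `[-L/2, L/2)^d`. -/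
def boxHalf (d : ℕ) (L : ℝ) : Set (Pt d) := {x | ∀ i, -(L/2) ≤ x i ∧ x i < L/2}

/-- The cube `Λ_l = [-a(l+1/2), a(l+1/2))^d`, a union of cubes of `Δ̄_a`. -/
def boxLat (d : ℕ) (a : ℝ) (l : ℕ) : Set (Pt d) :=
  {x | ∀ i, -(a*(l+1/2)) ≤ x i ∧ x i < a*(l+1/2)}


/-!
Write `φ = φ⁺ - φ⁻`. Pairs inside one cube `Δ` contribute at least `b(a) (|γ_Δ|² - |γ_Δ|)`
to `Σ φ⁺`; bounding `φ⁻` between the cubes `Δ, Δ'` by the corresponding term of `v₀(a)` and using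
`n n' ≤ (n² + n'²) / 2` gives `Σ φ⁻ ≤ v₀(a) Σ_Δ |γ_Δ|²`. Comparing cube by cube yields the
inequality for every `a` with `v₀(a) < ∞`.

For small `a`, the core bound gives `b(a) ≥ φ₀ (a √d)^{-s}`, while `φ⁻(t) = O((1 + t)^{-e})` for
some `d < e < s`; since a point of `Δ_a(q)` is at distance `≥ a (|q_i| - 1)` from `Δ_a(0)` in every
coordinate, `v₀(a)` is bounded by a product of one-dimensional sums, which is `O(a^{-e})`. As
`e < s`, eventually `2 v₀(a) < b(a)`.
-/

open Finset

section CubeGeometry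

variable {d : ℕ} {a : ℝ}

theorem cubeIdx_eq_iff (ha : 0 < a) (x : Pt d) (r : Fin d → ℤ) :
    cubeIdx d a x = r ↔ ∀ i, a * (r i - 1 / 2) ≤ x i ∧ x i < a * (r i + 1 / 2) := by
  simp only [funext_iff, cubeIdx, Int.floor_eq_iff]
  refine forall_congr' fun i => ?_
  rw [← sub_le_iff_le_add, ← lt_sub_iff_add_lt, le_div_iff₀ ha, div_lt_iff₀ ha]
  constructor <;> rintro ⟨h₁, h₂⟩ <;> constructor <;> linarith

theorem dist_le_of_cubeIdx_eq (ha : 0 < a) {x y : Pt d} (h : cubeIdx d a x = cubeIdx d a y) :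
    dist x y ≤ a * √d := by
  have hcoord : ∀ i, dist (x i) (y i) ^ 2 ≤ a ^ 2 := fun i => by
    obtain ⟨hx₁, hx₂⟩ := (cubeIdx_eq_iff ha x _).1 rfl i
    obtain ⟨hy₁, hy₂⟩ := (cubeIdx_eq_iff ha y _).1 h.symm i
    rw [Real.dist_eq, sq_abs]
    nlinarith
  calc dist x y = √(∑ i, dist (x i) (y i) ^ 2) := EuclideanSpace.dist_eq x y
    _ ≤ √(∑ _i : Fin d, a ^ 2) := Real.sqrt_le_sqrt (sum_le_sum fun i _ => hcoord i)
    _ = a * √d := by simp [Real.sqrt_sq ha.le, mul_comm]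

theorem mul_abs_sub_cubeIdx_sub_one_le_dist (ha : 0 < a) (x y : Pt d) (i : Fin d) :
    a * (|(cubeIdx d a y i : ℝ) - cubeIdx d a x i| - 1) ≤ dist x y := by
  obtain ⟨hx₁, hx₂⟩ := (cubeIdx_eq_iff ha x _).1 rfl i
  obtain ⟨hy₁, hy₂⟩ := (cubeIdx_eq_iff ha y _).1 rfl i
  have hi : |x i - y i| ≤ dist x y := by
    simpa only [Real.dist_eq] using PiLp.dist_apply_le x y i
  rcases abs_cases ((cubeIdx d a y i : ℝ) - cubeIdx d a x i) with ⟨h, -⟩ | ⟨h, -⟩ <;>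
    rw [h] <;> linarith [le_abs_self (x i - y i), neg_abs_le (x i - y i)]

theorem exists_ne_cubeIdx_eq (hd : 1 ≤ d) (ha : 0 < a) :
    ∃ x y : Pt d, x ≠ y ∧ cubeIdx d a x = cubeIdx d a y := by
  have hcube : ∀ c : ℝ, |c| ≤ a / 4 → cubeIdx d a (WithLp.toLp 2 fun _ => c) = 0 := by
    intro c hc
    rw [cubeIdx_eq_iff ha]
    intro i
    simp only [Pi.zero_apply, Int.cast_zero, zero_sub, zero_add]
    constructor <;> linarith [abs_le.1 hc]
  refine ⟨WithLp.toLp 2 fun _ => 0, WithLp.toLp 2 fun _ => a / 4, fun h => ?_, ?_⟩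
  · have : (0 : ℝ) = a / 4 := congrArg (fun z : Pt d => z ⟨0, hd⟩) h
    linarith
  · rw [hcube 0 (by rw [abs_zero]; positivity), hcube (a / 4) (by rw [abs_of_pos (by positivity)])]

theorem cubeIdx_sub_toLp (ha : 0 < a) (x : Pt d) (r : Fin d → ℤ) :
    cubeIdx d a (x - WithLp.toLp 2 fun i => a * r i) = cubeIdx d a x - r := by
  funext i
  have h : (x i - a * r i) / a + 1 / 2 = x i / a + 1 / 2 + ((-r i : ℤ) : ℝ) := by
    push_cast; field_simp; ring
  simp only [cubeIdx, PiLp.sub_apply, Pi.sub_apply, h, Int.floor_add_intCast]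
  ring

end CubeGeometry

theorem sum_sum_mul_mul_le_of_sum_le {G : Type*} [AddCommGroup G] (S : Finset G) (n w : G → ℝ)
    {v : ℝ} (hw : ∀ q, 0 ≤ w q) (hv : ∀ T : Finset G, ∑ q ∈ T, w q ≤ v) :
    ∑ r ∈ S, ∑ r' ∈ S, n r * n r' * w (r' - r) ≤ v * ∑ r ∈ S, n r ^ 2 := by
  have hrow : ∀ r, ∑ r' ∈ S, w (r' - r) ≤ v := fun r => by
    rw [← sum_image fun _ _ _ _ h => sub_left_injective h]; exact hv _
  have hcol : ∀ r', ∑ r ∈ S, w (r' - r) ≤ v := fun r' => by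
    rw [← sum_image fun _ _ _ _ h => sub_right_injective h]; exact hv _
  calc ∑ r ∈ S, ∑ r' ∈ S, n r * n r' * w (r' - r)
      ≤ ∑ r ∈ S, ∑ r' ∈ S, (n r ^ 2 / 2 * w (r' - r) + n r' ^ 2 / 2 * w (r' - r)) := by
        gcongr with r _ r' _
        nlinarith [hw (r' - r), sq_nonneg (n r - n r')]
    _ = ∑ r ∈ S, n r ^ 2 / 2 * ∑ r' ∈ S, w (r' - r)
          + ∑ r' ∈ S, n r' ^ 2 / 2 * ∑ r ∈ S, w (r' - r) := by
        simp only [sum_add_distrib, mul_sum]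
        rw [sum_comm (f := fun r r' => n r' ^ 2 / 2 * w (r' - r))]
    _ ≤ ∑ r ∈ S, n r ^ 2 / 2 * v + ∑ r' ∈ S, n r' ^ 2 / 2 * v := by
        gcongr with r _ r' _
        · exact hrow r
        · exact hcol r'
    _ = v * ∑ r ∈ S, n r ^ 2 := by
        rw [← sum_add_distrib, mul_sum]; exact sum_congr rfl fun r _ => by ring

theorem sum_sum_le_sum_sum_card_mul_card {α β : Type*} [DecidableEq β] (s : Finset α)
    (g : α → β) (f : α → α → ℝ) (c : β → β → ℝ) (h : ∀ x ∈ s, ∀ y ∈ s, f x y ≤ c (g x) (g y)) :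
    ∑ x ∈ s, ∑ y ∈ s, f x y ≤
      ∑ r ∈ s.image g, ∑ r' ∈ s.image g, #{x ∈ s | g x = r} * #{y ∈ s | g y = r'} * c r r' := by
  calc ∑ x ∈ s, ∑ y ∈ s, f x y ≤ ∑ x ∈ s, ∑ y ∈ s, c (g x) (g y) := sum_le_sum fun x hx =>
        sum_le_sum fun y hy => h x hx y hy
    _ = ∑ r ∈ s.image g, #{x ∈ s | g x = r} • ∑ y ∈ s, c r (g y) :=
        sum_comp (fun r => ∑ y ∈ s, c r (g y)) g
    _ = _ := by
      refine sum_congr rfl fun r _ => ?_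
      rw [sum_comp (c r) g, nsmul_eq_mul, mul_sum]
      exact sum_congr rfl fun r' _ => by rw [nsmul_eq_mul]; ring

section Energy

variable {d : ℕ} {φ : ℝ → ℝ} {a : ℝ}

theorem phiPlus_sub_phiMinus (φ : ℝ → ℝ) (t : ℝ) : phiPlus φ t - phiMinus φ t = φ t := by
  unfold phiPlus phiMinus
  rcases le_total (φ t) 0 with h | h
  · rw [max_eq_right h, max_eq_left (by linarith)]; ring
  · rw [max_eq_left h, max_eq_right (by linarith)]; ring

theorem phiPlus_nonneg (φ : ℝ → ℝ) (t : ℝ) : 0 ≤ phiPlus φ t := le_max_right _ _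

theorem phiMinus_nonneg (φ : ℝ → ℝ) (t : ℝ) : 0 ≤ phiMinus φ t := le_max_right _ _

theorem bVal_nonneg : 0 ≤ bVal d φ a :=
  Real.sInf_nonneg (by rintro t ⟨x, y, -, -, rfl⟩; exact phiPlus_nonneg φ _)

theorem bVal_le_phiPlus {x y : Pt d} (hxy : x ≠ y) (h : cubeIdx d a x = cubeIdx d a y) :
    bVal d φ a ≤ phiPlus φ (dist x y) :=
  csInf_le ⟨0, by rintro t ⟨x, y, -, -, rfl⟩; exact phiPlus_nonneg φ _⟩ ⟨x, y, hxy, h, rfl⟩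

def v0Term (d : ℕ) (φ : ℝ → ℝ) (a : ℝ) (q : Fin d → ℤ) : ℝ≥0∞ :=
  ⨆ x ∈ {x : Pt d | cubeIdx d a x = 0}, ⨆ y ∈ {y : Pt d | cubeIdx d a y = q},
    ENNReal.ofReal (phiMinus φ (dist x y))

theorem v0E_eq_tsum_v0Term : v0E d φ a = ∑' q, v0Term d φ a q := rfl

theorem v0Term_le_v0E (q : Fin d → ℤ) : v0Term d φ a q ≤ v0E d φ a := ENNReal.le_tsum q

theorem sum_toReal_v0Term_le (hv : v0E d φ a ≠ ⊤) (T : Finset (Fin d → ℤ)) :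
    ∑ q ∈ T, (v0Term d φ a q).toReal ≤ v0Val d φ a := by
  rw [← ENNReal.toReal_sum fun q _ => ne_top_of_le_ne_top hv (v0Term_le_v0E q)]
  exact ENNReal.toReal_mono hv (ENNReal.sum_le_tsum T)

theorem phiMinus_le_toReal_v0Term (ha : 0 < a) (hv : v0E d φ a ≠ ⊤) (x y : Pt d) :
    phiMinus φ (dist x y) ≤ (v0Term d φ a (cubeIdx d a y - cubeIdx d a x)).toReal := by
  set c : Pt d := WithLp.toLp 2 fun i => a * cubeIdx d a x i
  have hle : ENNReal.ofReal (phiMinus φ (dist x y)) ≤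
      v0Term d φ a (cubeIdx d a y - cubeIdx d a x) := by
    rw [← dist_sub_right x y c]
    refine le_iSup₂_of_le (x - c) ?_ (le_iSup₂_of_le (y - c) ?_ le_rfl)
    · simp [c, cubeIdx_sub_toLp ha]
    · simp [c, cubeIdx_sub_toLp ha]
  exact (ENNReal.ofReal_le_iff_le_toReal (ne_top_of_le_ne_top hv (v0Term_le_v0E _))).1 hle

variable (γ : Finset (Pt d))

theorem bVal_mul_sum_le_sum_offDiag_phiPlus :
    bVal d φ a * ∑ r ∈ γ.image (cubeIdx d a), ((cubeCount d a γ r : ℝ) ^ 2 - cubeCount d a γ r)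
      ≤ ∑ p ∈ γ.offDiag, phiPlus φ (dist p.1 p.2) := by
  set Γ := fun r => γ.filter fun x => cubeIdx d a x = r
  have hdisj : (γ.image (cubeIdx d a) : Set (Fin d → ℤ)).PairwiseDisjoint
      fun r => (Γ r).offDiag := by
    intro r _ r' _ hne
    refine disjoint_left.2 fun p hp hp' => hne ?_
    rw [Finset.mem_offDiag] at hp hp'
    exact (mem_filter.1 hp.1).2.symm.trans (mem_filter.1 hp'.1).2
  have hsub : (γ.image (cubeIdx d a)).biUnion (fun r => (Γ r).offDiag) ⊆ γ.offDiag := by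
    intro p hp
    obtain ⟨r, -, hp⟩ := mem_biUnion.1 hp
    rw [Finset.mem_offDiag] at hp ⊢
    exact ⟨(mem_filter.1 hp.1).1, (mem_filter.1 hp.2.1).1, hp.2.2⟩
  calc bVal d φ a * ∑ r ∈ γ.image (cubeIdx d a), ((cubeCount d a γ r : ℝ) ^ 2 - cubeCount d a γ r)
      = ∑ r ∈ γ.image (cubeIdx d a), (Γ r).offDiag.card • bVal d φ a := by
        rw [mul_sum]
        refine sum_congr rfl fun r _ => ?_
        rw [nsmul_eq_mul, offDiag_card, Nat.cast_sub (Nat.le_mul_self _), cubeCount]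
        push_cast; ring
    _ ≤ ∑ r ∈ γ.image (cubeIdx d a), ∑ p ∈ (Γ r).offDiag, phiPlus φ (dist p.1 p.2) := by
        refine sum_le_sum fun r _ => card_nsmul_le_sum _ _ _ fun p hp => ?_
        rw [Finset.mem_offDiag] at hp
        exact bVal_le_phiPlus hp.2.2 ((mem_filter.1 hp.1).2.trans (mem_filter.1 hp.2.1).2.symm)
    _ = ∑ p ∈ (γ.image (cubeIdx d a)).biUnion (fun r => (Γ r).offDiag), phiPlus φ (dist p.1 p.2) :=
        (sum_biUnion hdisj).symm
    _ ≤ ∑ p ∈ γ.offDiag, phiPlus φ (dist p.1 p.2) :=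
        sum_le_sum_of_subset_of_nonneg hsub fun p _ _ => phiPlus_nonneg φ _

theorem sum_offDiag_phiMinus_le (ha : 0 < a) (hv : v0E d φ a ≠ ⊤) :
    ∑ p ∈ γ.offDiag, phiMinus φ (dist p.1 p.2)
      ≤ v0Val d φ a * ∑ r ∈ γ.image (cubeIdx d a), (cubeCount d a γ r : ℝ) ^ 2 := by
  calc ∑ p ∈ γ.offDiag, phiMinus φ (dist p.1 p.2)
      ≤ ∑ x ∈ γ, ∑ y ∈ γ, phiMinus φ (dist x y) := by
        rw [← sum_product', ← product_sdiff_diag]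
        exact sum_le_sum_of_subset_of_nonneg sdiff_subset fun p _ _ => phiMinus_nonneg φ _
    _ ≤ ∑ r ∈ γ.image (cubeIdx d a), ∑ r' ∈ γ.image (cubeIdx d a),
          (cubeCount d a γ r : ℝ) * cubeCount d a γ r' * (v0Term d φ a (r' - r)).toReal :=
        sum_sum_le_sum_sum_card_mul_card γ (cubeIdx d a) (fun x y => phiMinus φ (dist x y))
          (fun r r' => (v0Term d φ a (r' - r)).toReal)
          fun x _ y _ => phiMinus_le_toReal_v0Term ha hv x y
    _ ≤ _ := sum_sum_mul_mul_le_of_sum_le _ (fun r => (cubeCount d a γ r : ℝ))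
          (fun q => (v0Term d φ a q).toReal) (fun _ => ENNReal.toReal_nonneg)
          (sum_toReal_v0Term_le hv)

theorem superstability_cube_bound {b v : ℝ} (hb : 0 ≤ b) (hv : 0 ≤ v) {n : ℕ} (hn : 1 ≤ n) :
    (b - 2 * v) / 4 * (if 2 ≤ n then (n : ℝ) ^ 2 else 0) - v / 2 * n
      ≤ (b * ((n : ℝ) ^ 2 - n) - v * (n : ℝ) ^ 2) / 2 := by
  split_ifs with h2
  · have h2' : (2 : ℝ) ≤ n := by exact_mod_cast h2
    nlinarith [mul_nonneg hb (mul_nonneg (sub_nonneg.2 h2') (Nat.cast_nonneg n))]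
  · obtain rfl : n = 1 := by omega
    norm_num [neg_div]

theorem le_energy_of_v0E_ne_top (ha : 0 < a) (hv : v0E d φ a ≠ ⊤) :
    (bVal d φ a - 2 * v0Val d φ a) / 4 * densSum d a γ - v0Val d φ a / 2 * γ.card
      ≤ energy d φ γ := by
  set n := cubeCount d a γ
  have hn : ∀ r ∈ γ.image (cubeIdx d a), 1 ≤ n r := fun r hr => by
    obtain ⟨x, hx, rfl⟩ := mem_image.1 hr
    exact card_pos.2 ⟨x, mem_filter.2 ⟨hx, rfl⟩⟩
  have hcard : (γ.card : ℝ) = ∑ r ∈ γ.image (cubeIdx d a), (n r : ℝ) := by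
    rw [card_eq_sum_card_image (cubeIdx d a) γ]; push_cast; rfl
  have hU : energy d φ γ = (∑ p ∈ γ.offDiag, phiPlus φ (dist p.1 p.2)
      - ∑ p ∈ γ.offDiag, phiMinus φ (dist p.1 p.2)) / 2 := by
    rw [energy, ← sum_sub_distrib]
    simp only [phiPlus_sub_phiMinus]
  calc (bVal d φ a - 2 * v0Val d φ a) / 4 * densSum d a γ - v0Val d φ a / 2 * γ.card
      = ∑ r ∈ γ.image (cubeIdx d a), ((bVal d φ a - 2 * v0Val d φ a) / 4 *
          (if 2 ≤ n r then (n r : ℝ) ^ 2 else 0) - v0Val d φ a / 2 * n r) := by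
        rw [densSum, hcard, mul_sum, mul_sum, ← sum_sub_distrib]
    _ ≤ ∑ r ∈ γ.image (cubeIdx d a),
          (bVal d φ a * ((n r : ℝ) ^ 2 - n r) - v0Val d φ a * (n r : ℝ) ^ 2) / 2 :=
        sum_le_sum fun r hr => superstability_cube_bound bVal_nonneg ENNReal.toReal_nonneg (hn r hr)
    _ = (bVal d φ a * ∑ r ∈ γ.image (cubeIdx d a), ((n r : ℝ) ^ 2 - n r)
          - v0Val d φ a * ∑ r ∈ γ.image (cubeIdx d a), (n r : ℝ) ^ 2) / 2 := by
        rw [← sum_div, mul_sum, mul_sum, ← sum_sub_distrib]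
    _ ≤ energy d φ γ := by
        rw [hU]
        linarith [bVal_mul_sum_le_sum_offDiag_phiPlus (φ := φ) (a := a) γ,
          sum_offDiag_phiMinus_le γ ha hv]

end Energy

theorem ENNReal.tsum_pi_prod_eq_pow {α : Type*} (g : α → ℝ≥0∞) (n : ℕ) :
    ∑' r : Fin n → α, ∏ i, g (r i) = (∑' k, g k) ^ n := by
  induction n with
  | zero => simp
  | succ n ih =>
    rw [← (Fin.consEquiv fun _ => α).tsum_eq, ENNReal.tsum_prod', pow_succ', ← ih,
      ← ENNReal.tsum_mul_right]
    refine tsum_congr fun k => ?_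
    rw [← ENNReal.tsum_mul_left]
    refine tsum_congr fun r => ?_
    simp [Fin.consEquiv, Fin.prod_univ_succ]

theorem summable_one_add_abs_int_rpow_neg {p : ℝ} (hp : 1 < p) :
    Summable fun k : ℤ => (1 + |(k : ℝ)|) ^ (-p) := by
  refine (Real.summable_abs_int_rpow hp).of_norm_bounded_eventually ?_
  filter_upwards [eventually_cofinite_ne 0] with k hk
  rw [Real.norm_of_nonneg (by positivity)]
  exact Real.rpow_le_rpow_of_nonpos (by positivity) (by linarith) (by linarith)

section DecayBound

variable {d : ℕ} {φ : ℝ → ℝ} {a : ℝ}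

theorem rpow_neg_one_add_dist_le_prod (ha : 0 < a) (ha1 : a ≤ 1) {p : ℝ} (hp : 0 ≤ p)
    (x y : Pt d) :
    (1 + dist x y) ^ (-(d * p)) ≤
      (2 / a) ^ (d * p) * ∏ i, (1 + |(cubeIdx d a y i : ℝ) - cubeIdx d a x i|) ^ (-p) := by
  have hpow : ∀ c : ℝ, 0 ≤ c → ∀ q : ℝ, c ^ (d * q) = ∏ _i : Fin d, c ^ q := fun c hc q => by
    rw [prod_const, card_univ, Fintype.card_fin, ← Real.rpow_natCast, ← Real.rpow_mul hc,
      mul_comm]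
  have hfac : ∀ i, (1 + dist x y) ^ (-p) ≤
      (2 / a) ^ p * (1 + |(cubeIdx d a y i : ℝ) - cubeIdx d a x i|) ^ (-p) := fun i => by
    have hlow : a / 2 * (1 + |(cubeIdx d a y i : ℝ) - cubeIdx d a x i|) ≤ 1 + dist x y := by
      linarith [mul_abs_sub_cubeIdx_sub_one_le_dist ha x y i, dist_nonneg (x := x) (y := y)]
    calc (1 + dist x y) ^ (-p)
        ≤ (a / 2 * (1 + |(cubeIdx d a y i : ℝ) - cubeIdx d a x i|)) ^ (-p) :=
          Real.rpow_le_rpow_of_nonpos (by positivity) hlow (by linarith)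
      _ = _ := by
          rw [Real.mul_rpow (by positivity) (by positivity), Real.rpow_neg (by positivity),
            ← Real.inv_rpow (by positivity), inv_div]
  rw [neg_mul_eq_mul_neg, hpow _ (by positivity), hpow _ (by positivity), ← prod_mul_distrib]
  exact prod_le_prod (fun i _ => by positivity) fun i _ => hfac i

/-- The term `q = 0` of `v0E` contains the pairs `x = y`, i.e. the junk value `φ 0`. -/
theorem v0E_le_ofReal_mul_rpow (hd : 1 ≤ d) {e K : ℝ} (hde : (d : ℝ) < e)
    (hK : ∀ t, 0 ≤ t → phiMinus φ t ≤ K * (1 + t) ^ (-e)) :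
    ∃ C, 0 ≤ C ∧ ∀ a, 0 < a → a ≤ 1 → v0E d φ a ≤ ENNReal.ofReal (C * a ^ (-e)) := by
  have hd0 : (0 : ℝ) < d := by exact_mod_cast hd
  obtain ⟨p, hp, rfl⟩ : ∃ p, 1 < p ∧ e = d * p :=
    ⟨e / d, (one_lt_div hd0).2 hde, by field_simp⟩
  have hK0 : 0 ≤ K := by simpa using (phiMinus_nonneg φ 0).trans (hK 0 le_rfl)
  have hS : 0 ≤ ∑' k : ℤ, (1 + |(k : ℝ)|) ^ (-p) := tsum_nonneg fun k => by positivity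
  refine ⟨K * 2 ^ (d * p) * (∑' k : ℤ, (1 + |(k : ℝ)|) ^ (-p)) ^ d, by positivity,
    fun a ha ha1 => ?_⟩
  have hterm : ∀ q, v0Term d φ a q ≤ ENNReal.ofReal (K * (2 / a) ^ (d * p)) *
      ∏ i, ENNReal.ofReal ((1 + |(q i : ℝ)|) ^ (-p)) := by
    intro q
    rw [← ENNReal.ofReal_prod_of_nonneg fun i _ => by positivity,
      ← ENNReal.ofReal_mul (by positivity)]
    refine iSup₂_le fun x hx => iSup₂_le fun y hy => ENNReal.ofReal_le_ofReal ?_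
    have h := rpow_neg_one_add_dist_le_prod ha ha1 (p := p) (by linarith) x y
    rw [Set.mem_ofPred_eq] at hx hy
    simp only [hx, hy, Pi.zero_apply, Int.cast_zero, sub_zero] at h
    calc phiMinus φ (dist x y) ≤ K * (1 + dist x y) ^ (-(d * p)) := hK _ dist_nonneg
      _ ≤ _ := by rw [mul_assoc]; exact mul_le_mul_of_nonneg_left h hK0
  calc v0E d φ a = ∑' q, v0Term d φ a q := v0E_eq_tsum_v0Term
    _ ≤ ∑' q : Fin d → ℤ, ENNReal.ofReal (K * (2 / a) ^ (d * p)) *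
          ∏ i, ENNReal.ofReal ((1 + |(q i : ℝ)|) ^ (-p)) := ENNReal.tsum_le_tsum hterm
    _ = ENNReal.ofReal (K * (2 / a) ^ (d * p)) *
          ENNReal.ofReal (∑' k : ℤ, (1 + |(k : ℝ)|) ^ (-p)) ^ d := by
        rw [ENNReal.tsum_mul_left,
          ENNReal.tsum_pi_prod_eq_pow (fun k : ℤ => ENNReal.ofReal ((1 + |(k : ℝ)|) ^ (-p))),
          ENNReal.ofReal_tsum_of_nonneg (fun k => by positivity)
            (summable_one_add_abs_int_rpow_neg hp)]
    _ = _ := by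
        rw [← ENNReal.ofReal_pow hS,
          ← ENNReal.ofReal_mul (by positivity), Real.div_rpow (by norm_num) ha.le,
          Real.rpow_neg ha.le]
        ring_nf

end DecayBound

theorem div_rpow_le_bVal {d : ℕ} (hd : 1 ≤ d) {φ : ℝ → ℝ} {r₀ φ₀ s a : ℝ} (hφ₀ : 0 ≤ φ₀)
    (hs : 0 ≤ s) (hcore : ∀ t, 0 < t → t ≤ r₀ → φ₀ / t ^ s ≤ φ t) (ha : 0 < a)
    (har : a * √d ≤ r₀) :
    φ₀ / (a * √d) ^ s ≤ bVal d φ a := by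
  obtain ⟨x, y, hxy, h⟩ := exists_ne_cubeIdx_eq hd ha
  refine le_csInf ⟨_, x, y, hxy, h, rfl⟩ ?_
  rintro t ⟨x, y, hxy, h, rfl⟩
  have hdist := dist_le_of_cubeIdx_eq ha h
  have hpos := dist_pos.2 hxy
  calc φ₀ / (a * √d) ^ s ≤ φ₀ / dist x y ^ s :=
        div_le_div_of_nonneg_left hφ₀ (Real.rpow_pos_of_pos hpos s)
          (Real.rpow_le_rpow hpos.le hdist hs)
    _ ≤ φ (dist x y) := hcore _ hpos (hdist.trans har)
    _ ≤ phiPlus φ (dist x y) := le_max_left _ _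

namespace AssumptionA

variable {d : ℕ} {φ : ℝ → ℝ} {r₀ R φ₀ φ₁ ε₀ s : ℝ}

theorem phiMinus_eq_zero (hA : AssumptionA d φ r₀ R φ₀ φ₁ ε₀ s) {t : ℝ} (ht : 0 < t)
    (htr : t ≤ r₀) : phiMinus φ t = 0 :=
  max_eq_right (by linarith [hA.core t ht htr, div_pos hA.phi0_pos (Real.rpow_pos_of_pos ht s)])

theorem exists_phiMinus_le (hA : AssumptionA d φ r₀ R φ₀ φ₁ ε₀ s) :
    ∃ M, ∀ t, 0 ≤ t → t ≤ R → phiMinus φ t ≤ M := by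
  obtain ⟨M, hM⟩ := isCompact_Icc.exists_bound_of_continuousOn
    (hA.cont.mono fun t ht => hA.r0_pos.trans_le ht.1 : ContinuousOn φ (Icc r₀ R))
  refine ⟨max (phiMinus φ 0) M, fun t ht htR => ?_⟩
  rcases ht.eq_or_lt with rfl | ht
  · exact le_max_left _ _
  rcases le_or_gt t r₀ with htr | htr
  · rw [hA.phiMinus_eq_zero ht htr]
    exact (phiMinus_nonneg φ 0).trans (le_max_left _ _)
  · have hMt := hM t ⟨htr.le, htR⟩
    rw [Real.norm_eq_abs] at hMt
    exact le_max_of_le_right (max_le ((neg_le_abs _).trans hMt) ((abs_nonneg _).trans hMt))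

theorem phiMinus_mul_rpow_le (hA : AssumptionA d φ r₀ R φ₀ φ₁ ε₀ s) {e : ℝ} (he₀ : 0 ≤ e)
    (he : e ≤ d + ε₀) {t : ℝ} (ht : R ≤ t) :
    phiMinus φ t * (1 + t) ^ e ≤ φ₁ * (1 + 1 / R) ^ e * R ^ (e - (d + ε₀)) := by
  have hR : 0 < R := hA.r0_pos.trans hA.R_gt
  have ht₀ : 0 < t := hR.trans_le ht
  have hφ : phiMinus φ t ≤ φ₁ / t ^ ((d : ℝ) + ε₀) :=
    max_le (by linarith [hA.decay t ht]) (div_nonneg hA.phi1_pos.le (by positivity))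
  have h1t : (1 + t) ^ e ≤ (1 + 1 / R) ^ e * t ^ e := by
    rw [← Real.mul_rpow (by positivity) ht₀.le]
    refine Real.rpow_le_rpow (by positivity) ?_ he₀
    rw [add_mul, one_mul, div_mul_eq_mul_div, one_mul, add_comm]
    gcongr
    rwa [one_le_div hR]
  calc phiMinus φ t * (1 + t) ^ e ≤ φ₁ / t ^ ((d : ℝ) + ε₀) * ((1 + 1 / R) ^ e * t ^ e) :=
        mul_le_mul hφ h1t (by positivity) ((phiMinus_nonneg φ t).trans hφ)
    _ = φ₁ * (1 + 1 / R) ^ e * t ^ (e - (d + ε₀)) := by rw [Real.rpow_sub ht₀]; ring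
    _ ≤ φ₁ * (1 + 1 / R) ^ e * R ^ (e - (d + ε₀)) :=
        mul_le_mul_of_nonneg_left (Real.rpow_le_rpow_of_nonpos hR ht (by linarith))
          (mul_nonneg hA.phi1_pos.le (by positivity))

theorem exists_phiMinus_le_mul_rpow (hA : AssumptionA d φ r₀ R φ₀ φ₁ ε₀ s) {e : ℝ}
    (he₀ : 0 ≤ e) (he : e ≤ d + ε₀) :
    ∃ K, ∀ t, 0 ≤ t → phiMinus φ t ≤ K * (1 + t) ^ (-e) := by
  obtain ⟨M, hM⟩ := hA.exists_phiMinus_le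
  refine ⟨max (M * (1 + R) ^ e) (φ₁ * (1 + 1 / R) ^ e * R ^ (e - (d + ε₀))), fun t ht => ?_⟩
  rw [Real.rpow_neg (by positivity), ← div_eq_mul_inv, le_div_iff₀ (by positivity)]
  rcases le_total t R with htR | htR
  · refine le_max_of_le_left (mul_le_mul (hM t ht htR) ?_ (by positivity)
      ((phiMinus_nonneg φ t).trans (hM t ht htR)))
    exact Real.rpow_le_rpow (by positivity) (by linarith) he₀
  · exact le_max_of_le_right (hA.phiMinus_mul_rpow_le he₀ he htR)

theorem eventually_two_mul_v0Val_lt_bVal (hA : AssumptionA d φ r₀ R φ₀ φ₁ ε₀ s) (hd : 1 ≤ d)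
    (hs : (d : ℝ) < s) :
    ∀ᶠ a in 𝓝[>] 0, v0E d φ a ≠ ⊤ ∧ 2 * v0Val d φ a < bVal d φ a := by
  have hd₀ : (0 : ℝ) < d := by exact_mod_cast hd
  have hsd : 0 < √(d : ℝ) := Real.sqrt_pos.2 hd₀
  set e := min ((d : ℝ) + ε₀) ((d + s) / 2)
  have hde : (d : ℝ) < e := lt_min (by linarith [hA.eps0_pos]) (by linarith)
  have hes : e < s := (min_le_right _ _).trans_lt (by linarith)
  obtain ⟨K, hK⟩ := hA.exists_phiMinus_le_mul_rpow (by linarith) (min_le_left _ _)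
  obtain ⟨C, hC₀, hC⟩ := v0E_le_ofReal_mul_rpow hd hde hK
  have hlim : Tendsto (fun a : ℝ => 2 * C * √d ^ s * a ^ (s - e)) (𝓝[>] 0) (𝓝 0) := by
    have := ((Real.continuousAt_rpow_const 0 (s - e) (Or.inr (by linarith))).const_mul
      (2 * C * √d ^ s)).tendsto
    simpa [Real.zero_rpow (by linarith : s - e ≠ 0)] using this.mono_left nhdsWithin_le_nhds
  filter_upwards [Ioc_mem_nhdsGT one_pos, Ioc_mem_nhdsGT (div_pos hA.r0_pos hsd),
    hlim.eventually (gt_mem_nhds hA.phi0_pos)] with a ⟨ha, ha1⟩ ⟨_, har⟩ hsmall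
  have hv := hC a ha ha1
  refine ⟨ne_top_of_le_ne_top ENNReal.ofReal_ne_top hv, ?_⟩
  calc 2 * v0Val d φ a ≤ 2 * (C * a ^ (-e)) := by
        gcongr; exact ENNReal.toReal_le_of_le_ofReal (by positivity) hv
    _ < φ₀ / (a * √d) ^ s := by
        rw [lt_div_iff₀ (by positivity), Real.mul_rpow ha.le hsd.le]
        calc 2 * (C * a ^ (-e)) * (a ^ s * √d ^ s) = 2 * C * √d ^ s * (a ^ (-e) * a ^ s) := by ring
          _ = 2 * C * √d ^ s * a ^ (s - e) := by rw [← Real.rpow_add ha]; ring_nf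
          _ < φ₀ := hsmall
    _ ≤ bVal d φ a := div_rpow_le_bVal hd hA.phi0_pos.le (by linarith) hA.core ha
        (by rwa [le_div_iff₀ hsd] at har)

end AssumptionA

/-- Proposition 2.1.  Under Assumption (A) with `s > d` there exists
`a₀ ∈ (0, r₀]` such that for every `0 < a ≤ a₀` one has `v₀(a) < ∞`,
`A(a) = (b(a) - 2v₀(a))/4 > 0`, and the strong superstability inequality
`U(γ) ≥ A(a)·Σ_{Δ∈Δ̄_a : |γ_Δ|≥2} |γ_Δ|² - (v₀(a)/2)·|γ|` holds for every finite `γ`. -/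
theorem strong_superstability_of_assumptionA (d : ℕ) (hd : 1 ≤ d) (φ : ℝ → ℝ)
    (r₀ R φ₀ φ₁ ε₀ s : ℝ) (hA : AssumptionA d φ r₀ R φ₀ φ₁ ε₀ s) (hs : (d : ℝ) < s) :
    ∃ a₀ : ℝ, 0 < a₀ ∧ a₀ ≤ r₀ ∧ ∀ a : ℝ, 0 < a → a ≤ a₀ →
      v0E d φ a < ⊤ ∧
      0 < (bVal d φ a - 2 * v0Val d φ a) / 4 ∧
      ∀ γ : Finset (Pt d),
        (bVal d φ a - 2 * v0Val d φ a) / 4 * densSum d a γ - v0Val d φ a / 2 * γ.card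
          ≤ energy d φ γ := by
  obtain ⟨a₀, ha₀, hsub⟩ := mem_nhdsGT_iff_exists_Ioc_subset.1
    ((hA.eventually_two_mul_v0Val_lt_bVal hd hs).and (Ioc_mem_nhdsGT hA.r0_pos))
  refine ⟨a₀, ha₀, (hsub ⟨ha₀, le_rfl⟩).2.2, fun a ha haa₀ => ?_⟩
  obtain ⟨⟨hfin, hlt⟩, -⟩ := hsub ⟨ha, haa₀⟩
  exact ⟨hfin.lt_top, by linarith, fun γ => le_energy_of_v0E_ne_top γ ha hfin⟩
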